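/- arXiv:2101.07287 — 2 statements merged into one kernel-verified Lean document; each statement's English description precedes it below -/
import Mathlib

section
/- If every set of k columns of A is linearly independent and every set of k columns of B is linearly independent, then every set of k columns of A ⊗ B is linearly independent; that is, if spark(A) > k and spark(B) > k then spark(A ⊗ B) > k. -/
open Matrix Kronecker Finset

/-- Every set of at most `k` columns of `M` is linearly independent (i.e. spark(M) > k). -/
def SparkGt {m n : Type*} [Fintype m] [Fintype n]
    (M : Matrix m n ℂ) (k : ℕ) : Prop :=
  ∀ s : Finset n, s.card ≤ k → LinearIndependent ℂ (fun j : s => fun i : m => M i (j : n))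

/-- if spark(A) > k and spark(B) > k then spark(A ⊗ B) > k. -/
theorem spark_kronecker_gt
    (ma na mb nb k : ℕ)
    (A : Matrix (Fin ma) (Fin na) ℂ) (B : Matrix (Fin mb) (Fin nb) ℂ)
    (hA : SparkGt A k) (hB : SparkGt B k) :
    SparkGt (A ⊗ₖ B) k := by
  intro s hs
  rw [Fintype.linearIndependent_iff]
  intro g hg p
  classical
  set c : (Fin na × Fin nb) → ℂ := fun j => if h : j ∈ s then g ⟨j, h⟩ else 0 with hc
  have key : ∀ (i1 : Fin ma) (i2 : Fin mb),
      ∑ j ∈ s, c j * (A i1 j.1 * B i2 j.2) = 0 := by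
    intro i1 i2
    have h := congrFun hg (i1, i2)
    simp only [Finset.sum_apply, Pi.smul_apply, smul_eq_mul, Pi.zero_apply] at h
    rw [← h]
    rw [← Finset.sum_coe_sort s (fun j => c j * (A i1 j.1 * B i2 j.2))]
    apply Finset.sum_congr rfl
    intro j _
    simp [hc, j.2, kroneckerMap_apply]
  set s1 : Finset (Fin na) := s.image Prod.fst with hs1
  have h1 : ∀ (i2 : Fin mb) (j1 : Fin na),
      ∑ j ∈ s.filter (fun j => j.1 = j1), c j * B i2 j.2 = 0 := by
    intro i2 j1
    by_cases hj1 : j1 ∈ s1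
    · have hAind := hA s1 (le_trans Finset.card_image_le hs)
      rw [Fintype.linearIndependent_iff] at hAind
      have h0 : ∑ q : ↥s1,
          (∑ j ∈ s.filter (fun j => j.1 = (q : Fin na)), c j * B i2 j.2) •
            (fun i : Fin ma => A i (q : Fin na)) = 0 := by
        funext i1
        simp only [Finset.sum_apply, Pi.smul_apply, smul_eq_mul, Pi.zero_apply]
        rw [Finset.sum_coe_sort s1
          (fun q => (∑ j ∈ s.filter (fun j => j.1 = q), c j * B i2 j.2) * A i1 q)]
        have : ∀ q ∈ s1, (∑ j ∈ s.filter (fun j => j.1 = q), c j * B i2 j.2) * A i1 q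
            = ∑ j ∈ s.filter (fun j => j.1 = q), c j * (A i1 j.1 * B i2 j.2) := by
          intro q _
          rw [Finset.sum_mul]
          apply Finset.sum_congr rfl
          intro j hj
          rw [Finset.mem_filter] at hj
          rw [hj.2]; ring
        rw [Finset.sum_congr rfl this,
          Finset.sum_fiberwise_of_maps_to (fun j hj => Finset.mem_image_of_mem Prod.fst hj)]
        exact key i1 i2
      exact hAind _ h0 ⟨j1, hj1⟩
    · rw [Finset.filter_false_of_mem, Finset.sum_empty]
      intro j hj hj1'
      exact hj1 (hj1' ▸ Finset.mem_image_of_mem Prod.fst hj)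
  -- Step 2
  set p1 : Fin na := (p : Fin na × Fin nb).1 with hp1
  set t : Finset (Fin nb) := (s.filter (fun j => j.1 = p1)).image Prod.snd with hts
  have htcard : t.card ≤ k :=
    le_trans Finset.card_image_le (le_trans (Finset.card_filter_le _ _) hs)
  have hBind := hB t htcard
  rw [Fintype.linearIndependent_iff] at hBind
  have hinj : ∀ x ∈ s.filter (fun j => j.1 = p1), ∀ y ∈ s.filter (fun j => j.1 = p1),
      x.2 = y.2 → x = y := by
    intro x hx y hy hxy
    rw [Finset.mem_filter] at hx hy
    exact Prod.ext (hx.2.trans hy.2.symm) hxy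
  have h0B : ∑ j2 : ↥t, (fun j2 : ↥t => c (p1, (j2 : Fin nb))) j2 •
      (fun i : Fin mb => B i (j2 : Fin nb)) = 0 := by
    funext i2
    simp only [Finset.sum_apply, Pi.smul_apply, smul_eq_mul, Pi.zero_apply]
    rw [Finset.sum_coe_sort t (fun j2 => c (p1, j2) * B i2 j2), hts,
      Finset.sum_image hinj]
    rw [← h1 i2 p1]
    apply Finset.sum_congr rfl
    intro j hj
    rw [Finset.mem_filter] at hj
    have hje : (p1, j.2) = j := Prod.ext hj.2.symm rfl
    rw [hje]
  have hp2mem : (p : Fin na × Fin nb).2 ∈ t := by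
    apply Finset.mem_image_of_mem
    rw [Finset.mem_filter]
    exact ⟨p.2, rfl⟩
  have hz := hBind _ h0B ⟨(p : Fin na × Fin nb).2, hp2mem⟩
  have hcz : c ↑p = 0 := hz
  rw [hc] at hcz
  simp only [] at hcz
  rwa [dif_pos p.2] at hcz
end

section
/- For any vector y ∈ ℝ^m there exists at most one k-sparse vector x ∈ ℝ^n with y = Gx if and only if spark(G) > 2k. -/
open Matrix Finset

def IsSparseR {ι : Type*} (k : ℕ) (v : ι → ℝ) : Prop :=
  ∃ s : Finset ι, s.card ≤ k ∧ ∀ i ∉ s, v i = 0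

/-- Every set of at most `k` columns of the real matrix `M` is linearly independent,
    i.e. spark(M) > k. -/
def SparkGtR {m n : Type*} [Fintype m] [Fintype n]
    (M : Matrix m n ℝ) (k : ℕ) : Prop :=
  ∀ s : Finset n, s.card ≤ k → LinearIndependent ℝ (fun j : s => fun i : m => M i (j : n))

/-!
A vector is `2k`-sparse exactly when it is a difference of two `k`-sparse vectors. So two distinct
`k`-sparse solutions of `G x = y` exist iff some nonzero `2k`-sparse vector lies in the kernel of
`G`, i.e. iff some at most `2k` columns of `G` are linearly dependent.
-/

theorem Matrix.mulVec_eq_sum_smul_transpose {R m n : Type*} [CommSemiring R] [Fintype n]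
    (M : Matrix m n R) (v : n → R) : M *ᵥ v = ∑ j, v j • Mᵀ j := by
  simp only [mulVec_eq_sum, op_smul_eq_smul]

namespace IsSparseR

variable {ι : Type*} {k l : ℕ}

theorem sub {x y : ι → ℝ} (hx : IsSparseR k x) (hy : IsSparseR l y) :
    IsSparseR (k + l) (x - y) := by
  classical
  obtain ⟨s, hs, hxs⟩ := hx
  obtain ⟨t, ht, hyt⟩ := hy
  refine ⟨s ∪ t, (card_union_le s t).trans (by omega), fun i hi => ?_⟩
  rw [mem_union, not_or] at hi
  simp [hxs i hi.1, hyt i hi.2]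

theorem exists_eq_sub {v : ι → ℝ} (hv : IsSparseR (k + l) v) :
    ∃ x y : ι → ℝ, IsSparseR k x ∧ IsSparseR l y ∧ v = x - y := by
  classical
  obtain ⟨s, hs, hvs⟩ := hv
  obtain ⟨t, hts, ht⟩ := exists_subset_card_eq (min_le_right k s.card)
  refine ⟨fun i => if i ∈ t then v i else 0, fun i => if i ∈ t then 0 else -v i,
    ⟨t, by omega, fun i hi => if_neg hi⟩, ⟨s \ t, ?_, fun i hi => ?_⟩, ?_⟩
  · rw [card_sdiff_of_subset hts]
    omega
  · by_cases hit : i ∈ t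
    · exact if_pos hit
    · dsimp only
      rw [if_neg hit, hvs i fun his => hi (mem_sdiff.2 ⟨his, hit⟩), neg_zero]
  · funext i
    by_cases hit : i ∈ t <;> simp [hit]

end IsSparseR

theorem sparkGtR_iff_forall_sparse_mulVec_eq_zero {m n : Type*} [Fintype m] [Fintype n]
    (M : Matrix m n ℝ) (K : ℕ) :
    SparkGtR M K ↔ ∀ v : n → ℝ, IsSparseR K v → M *ᵥ v = 0 → v = 0 := by
  classical
  refine ⟨fun hM v ⟨s, hs, hvs⟩ hMv => ?_, fun hM s hs => ?_⟩
  · have hsum : ∑ j ∈ s, v j • Mᵀ j = 0 := by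
      rw [← hMv, mulVec_eq_sum_smul_transpose]
      exact sum_subset (subset_univ s) fun j _ hj => by rw [hvs j hj, zero_smul]
    funext j
    by_cases hj : j ∈ s
    · exact (linearIndepOn_finset_iff (v := Mᵀ)).1 (hM s hs) v hsum j hj
    · exact hvs j hj
  · show LinearIndepOn ℝ Mᵀ (s : Set n)
    refine linearIndepOn_finset_iff.2 fun f hf j hj => ?_
    have hzero := hM (fun i => if i ∈ s then f i else 0) ⟨s, hs, fun i hi => if_neg hi⟩ (by
      rw [mulVec_eq_sum_smul_transpose, ← hf]
      simp only [ite_smul, zero_smul, sum_ite_mem_eq])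
    simpa [hj] using congrFun hzero j

theorem sparse_eq_of_mulVec_eq_iff {m n : Type*} [Fintype n] (M : Matrix m n ℝ) (k l : ℕ) :
    (∀ x₁ x₂ : n → ℝ, IsSparseR k x₁ → IsSparseR l x₂ → M *ᵥ x₁ = M *ᵥ x₂ → x₁ = x₂) ↔
      ∀ v : n → ℝ, IsSparseR (k + l) v → M *ᵥ v = 0 → v = 0 := by
  refine ⟨fun hM v hv hMv => ?_, fun hM x₁ x₂ h₁ h₂ hMx => ?_⟩
  · obtain ⟨x₁, x₂, h₁, h₂, rfl⟩ := hv.exists_eq_sub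
    rw [hM x₁ x₂ h₁ h₂ (sub_eq_zero.1 (by rwa [← mulVec_sub])), sub_self]
  · exact sub_eq_zero.1 (hM _ (h₁.sub h₂) (by rw [mulVec_sub, hMx, sub_self]))

theorem unique_sparse_solution_iff_spark_general
    (m n k : ℕ) (G : Matrix (Fin m) (Fin n) ℝ) :
    (∀ y : Fin m → ℝ, ∀ x₁ x₂ : Fin n → ℝ,
      IsSparseR k x₁ → IsSparseR k x₂ →
      G.mulVec x₁ = y → G.mulVec x₂ = y → x₁ = x₂) ↔
    SparkGtR G (2 * k) := by
  rw [sparkGtR_iff_forall_sparse_mulVec_eq_zero, two_mul, ← sparse_eq_of_mulVec_eq_iff]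
  exact ⟨fun h x₁ x₂ h₁ h₂ hG => h _ x₁ x₂ h₁ h₂ rfl hG.symm,
    fun h _ x₁ x₂ h₁ h₂ hy₁ hy₂ => h x₁ x₂ h₁ h₂ (hy₁.trans hy₂.symm)⟩

/-- uniqueness of k-sparse solutions for every y holds iff spark(G) > 2k. -/
theorem unique_sparse_solution_iff_spark
    (m n k : ℕ) (hk : k ≤ n) (G : Matrix (Fin m) (Fin n) ℝ) :
    (∀ y : Fin m → ℝ, ∀ x₁ x₂ : Fin n → ℝ,
      IsSparseR k x₁ → IsSparseR k x₂ →
      G.mulVec x₁ = y → G.mulVec x₂ = y → x₁ = x₂) ↔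
    SparkGtR G (2 * k) :=
  unique_sparse_solution_iff_spark_general m n k G
end
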